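/- arXiv:2411.18780 — 8 statements merged into one kernel-verified Lean document; each statement's English description precedes it below -/
import Mathlib

section
/- Let R be a commutative ring and let P₁, P₂, Z ∈ R. For every natural number n, Σ_{k=0}^{n} (n choose k) · (∏_{i=0}^{k−1}(P₁ + i·Z)) · (∏_{j=0}^{n−k−1}(P₂ + j·Z)) = ∏_{i=0}^{n−1}(P₁ + P₂ + i·Z). -/
/-! Expanding `(P₁ + P₂)^{(n+1,Z)} = (P₁ + P₂)^{(n,Z)} · (P₁ + P₂ + nZ)` by induction, each term
`P₁^{(i,Z)} P₂^{(j,Z)}` with `i + j = n` is multiplied by `(P₁ + iZ) + (P₂ + jZ)`, which raises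
either factor by one step; Pascal's rule then reassembles the binomial coefficients. No
subtraction occurs, so the identity holds over any commutative semiring. -/

open Finset

section

variable {R : Type*} [CommSemiring R]

def risingFactorialStep (Z x : R) (n : ℕ) : R :=
  ∏ i ∈ range n, (x + i * Z)

@[simp]
theorem risingFactorialStep_zero (Z x : R) : risingFactorialStep Z x 0 = 1 :=
  prod_range_zero _

theorem risingFactorialStep_succ (Z x : R) (n : ℕ) :
    risingFactorialStep Z x (n + 1) = risingFactorialStep Z x n * (x + n * Z) :=
  prod_range_succ _ _

theorem risingFactorialStep_add (Z x y : R) (n : ℕ) :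
    risingFactorialStep Z (x + y) n =
      ∑ ij ∈ antidiagonal n,
        (n.choose ij.1 : R) * (risingFactorialStep Z x ij.1 * risingFactorialStep Z y ij.2) := by
  induction n with
  | zero => simp
  | succ n ih =>
    rw [risingFactorialStep_succ, ih, sum_mul, sum_antidiagonal_choose_succ_mul
      (fun i j => risingFactorialStep Z x i * risingFactorialStep Z y j), ← sum_add_distrib]
    refine sum_congr rfl fun ij hij => ?_
    obtain ⟨i, j⟩ := ij
    obtain rfl : i + j = n := HasAntidiagonal.mem_antidiagonal.mp hij
    rw [Nat.choose_symm_add, risingFactorialStep_succ, risingFactorialStep_succ]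
    push_cast
    ring

end

/-- The `Z`-homogeneous Chu–Vandermonde identity for rising factorials with step `Z`:
`∑ k, C(n,k) · P₁^{(k,Z)} · P₂^{(n−k,Z)} = (P₁+P₂)^{(n,Z)}`, where
`x^{(n,Z)} = ∏_{i=0}^{n−1} (x + i·Z)`. -/
theorem rising_factorial_chu_vandermonde {R : Type*} [CommRing R] (P₁ P₂ Z : R) (n : ℕ) :
    ∑ k ∈ Finset.range (n + 1),
      (n.choose k : R) * (∏ i ∈ Finset.range k, (P₁ + (i : R) * Z)) *
        (∏ j ∈ Finset.range (n - k), (P₂ + (j : R) * Z)) =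
      ∏ i ∈ Finset.range n, (P₁ + P₂ + (i : R) * Z) := by
  have h := risingFactorialStep_add Z P₁ P₂ n
  rw [Nat.sum_antidiagonal_eq_sum_range_succ
    (fun i j => (n.choose i : R) * (risingFactorialStep Z P₁ i * risingFactorialStep Z P₂ j))] at h
  simpa only [risingFactorialStep, mul_assoc] using h.symm
end

section
/- Let B be a commutative ring, t ∈ B, m ≥ 1, and set B_k = B/t^k. Let M be a module over B_m and let e : Fin r → M be a family of elements whose images in M/tM form a basis of M/tM over B₁. Assume that for every 0 ≤ n ≤ m−1, multiplication by tⁿ induces an isomorphism of B₁-modules M/tM ≅ tⁿM/t^{n+1}M. Then e is a basis of M as a B_m-module (in particular M is finite free of rank r over B_m). -/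
/-!
Surjectivity: lifting the generators mod `t` repeatedly writes every `x` as a combination of
the `e i` plus an element of `t ^ k • M`, and `t ^ m` kills `M`. Injectivity: if the
coefficients of a relation are divisible by `t ^ n` with `n < m`, dividing them by `t ^ n`
gives a combination whose `t ^ n`-multiple vanishes; injectivity of multiplication by `t ^ n`
on `M / tM` puts it in `tM`, and independence mod `t` makes the coefficients divisible by
`t ^ (n + 1)`.
-/

section

variable {B M ι : Type*} [CommRing B] [AddCommGroup M] [Module B M] [Fintype ι]
  {t : B} {e : ι → M}

theorem exists_eq_sum_smul_add_pow_smul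
    (hgen : ∀ x : M, ∃ (c : ι → B) (y : M), x = (∑ i, c i • e i) + t • y) (k : ℕ) (x : M) :
    ∃ (c : ι → B) (y : M), x = (∑ i, c i • e i) + t ^ k • y := by
  induction k generalizing x with
  | zero => exact ⟨0, x, by simp⟩
  | succ k ih =>
    obtain ⟨c, y, rfl⟩ := ih x
    obtain ⟨d, z, rfl⟩ := hgen y
    refine ⟨fun i => c i + t ^ k * d i, z, ?_⟩
    simp only [smul_add, Finset.smul_sum, add_smul, smul_smul, Finset.sum_add_distrib, pow_succ]
    abel

theorem coeff_mem_span_pow_succ_of_sum_smul_eq_zero {n : ℕ}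
    (hindep : ∀ c : ι → B, (∃ y : M, ∑ i, c i • e i = t • y) → ∀ i, c i ∈ Ideal.span {t})
    (hinj : ∀ x : M, (∃ y : M, t ^ n • x = t ^ (n + 1) • y) → ∃ y : M, x = t • y)
    {c : ι → B} (hc : ∑ i, c i • e i = 0) (hdvd : ∀ i, c i ∈ Ideal.span {t ^ n}) (i : ι) :
    c i ∈ Ideal.span {t ^ (n + 1)} := by
  choose b hb using fun i => Ideal.mem_span_singleton'.mp (hdvd i)
  have hpow : t ^ n • ∑ i, b i • e i = t ^ (n + 1) • (0 : M) := by
    simp only [Finset.smul_sum, smul_smul, smul_zero, mul_comm (t ^ n), hb, hc]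
  obtain ⟨a, ha⟩ := Ideal.mem_span_singleton'.mp (hindep b (hinj _ ⟨0, hpow⟩) i)
  exact Ideal.mem_span_singleton'.mpr ⟨a, by rw [← hb i, ← ha, pow_succ]; ring⟩

end

theorem basis_of_basis_mod_t_general {B : Type*} [CommRing B] (t : B) (m : ℕ)
    {M : Type*} [AddCommGroup M] [Module B M]
    (htors : ∀ x : M, t ^ m • x = 0)
    {r : ℕ} (e : Fin r → M)
    -- the images of `e` generate `M/tM`
    (hgen : ∀ x : M, ∃ (c : Fin r → B) (y : M), x = (∑ i, c i • e i) + t • y)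
    -- the images of `e` are linearly independent over `B₁ = B/t` in `M/tM`
    (hindep : ∀ c : Fin r → B, (∃ y : M, ∑ i, c i • e i = t • y) →
        ∀ i, c i ∈ Ideal.span {t})
    -- multiplication by `tⁿ` induces an isomorphism `M/tM ≅ tⁿM/t^{n+1}M`
    (hiso : ∀ n < m, ∀ x : M, (∃ y : M, t ^ n • x = t ^ (n + 1) • y) →
        ∃ y : M, x = t • y) :
    (∀ x : M, ∃ c : Fin r → B, x = ∑ i, c i • e i) ∧
      (∀ c : Fin r → B, ∑ i, c i • e i = 0 → ∀ i, c i ∈ Ideal.span {t ^ m}) := by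
  refine ⟨fun x => ?_, fun c hc => ?_⟩
  · obtain ⟨c, y, hx⟩ := exists_eq_sum_smul_add_pow_smul hgen m x
    exact ⟨c, by rw [hx, htors, add_zero]⟩
  · suffices h : ∀ n ≤ m, ∀ i, c i ∈ Ideal.span {t ^ n} from h m le_rfl
    intro n hn
    induction n with
    | zero => simp
    | succ n ih =>
      exact coeff_mem_span_pow_succ_of_sum_smul_eq_zero hindep (hiso n hn) hc
        (ih (Nat.le_of_succ_le hn))

/-- Let `B` be a commutative ring, `t ∈ B`, `m ≥ 1`, `B_k = B/t^k`. Let `M` be a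
`B_m`-module (i.e. a `B`-module killed by `t^m`) and `e : Fin r → M` a family whose
images in `M/tM` form a basis over `B₁` (i.e. they generate `M` modulo `tM`, and any
`B`-relation among them modulo `tM` has all coefficients in `(t)`). Assume that for
every `0 ≤ n ≤ m−1` multiplication by `tⁿ` induces an isomorphism of `B₁`-modules
`M/tM ≅ tⁿM/t^{n+1}M` (surjectivity of the induced map is automatic; injectivity says
that `tⁿ•x ∈ t^{n+1}M` implies `x ∈ tM`). Then `e` is a basis of `M` over `B_m`:
the coordinate map `(B_m)^r → M` is surjective and any `B`-relation among the `e i`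
has all coefficients in `(t^m)`; in particular `M` is finite free of rank `r` over
`B_m`. -/
theorem basis_of_basis_mod_t {B : Type*} [CommRing B] (t : B) (m : ℕ) (hm : 1 ≤ m)
    {M : Type*} [AddCommGroup M] [Module B M]
    (htors : ∀ x : M, t ^ m • x = 0)
    {r : ℕ} (e : Fin r → M)
    -- the images of `e` generate `M/tM`
    (hgen : ∀ x : M, ∃ (c : Fin r → B) (y : M), x = (∑ i, c i • e i) + t • y)
    -- the images of `e` are linearly independent over `B₁ = B/t` in `M/tM`
    (hindep : ∀ c : Fin r → B, (∃ y : M, ∑ i, c i • e i = t • y) →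
        ∀ i, c i ∈ Ideal.span {t})
    -- multiplication by `tⁿ` induces an isomorphism `M/tM ≅ tⁿM/t^{n+1}M`
    (hiso : ∀ n < m, ∀ x : M, (∃ y : M, t ^ n • x = t ^ (n + 1) • y) →
        ∃ y : M, x = t • y) :
    (∀ x : M, ∃ c : Fin r → B, x = ∑ i, c i • e i) ∧
      (∀ c : Fin r → B, ∑ i, c i • e i = 0 → ∀ i, c i ∈ Ideal.span {t ^ m}) :=
  basis_of_basis_mod_t_general t m htors e hgen hindep hiso
end

section
/- Let B be a commutative ring with a non-zero divisor t, and set B_m := B/t^m for m ≥ 1. Let M be a B_m-module such that M/tM is a finite projective B₁-module and such that for every 0 ≤ n ≤ m−1 the multiplication by tⁿ induces an isomorphism of B₁-modules M/tM ≅ tⁿM/t^{n+1}M. Then M is a finite projective B_m-module. -/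
/-!
Write `R = B/t^m` and let `f : R^r → M` be a presentation. Since `M/tM` is projective over
`B/t`, the reduction `f̄ : (B/t)^r → M/tM` has a section `s`, and `s ∘ f̄` is an idempotent
with kernel `ker f̄`. Idempotents lift along the nilpotent kernel of `End_R(R^r) → End(R^r/t)`,
so a lift `e` cuts out a projective summand `K` of `R^r` such that `f : K → M` is an
isomorphism mod `t`. Nakayama (for the nilpotent `t`) makes `K → M` surjective. An element
of its kernel is divisible in `K` by `tⁿ` for every `n ≤ m`, by induction: if it is `tⁿ w`,
then `tⁿ` kills the image of `w`, which therefore lies in `tM`, so `w ∈ tK` by injectivity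
mod `t`. Hence it vanishes, as `tᵐ K = 0`.
-/

open Submodule

section

variable {B : Type*} [CommRing B] {t : B} {m : ℕ}

theorem Submodule.mem_ideal_span_singleton_smul_top {M : Type*} [AddCommGroup M] [Module B M]
    {x : M} : x ∈ (Ideal.span {t} • ⊤ : Submodule B M) ↔ ∃ y, x = t • y := by
  simp [ideal_span_singleton_smul, mem_smul_pointwise_iff_exists, eq_comm]

section NilpotentScalar

variable {M N : Type*} [AddCommGroup M] [Module B M] [AddCommGroup N] [Module B N]

theorem LinearMap.surjective_of_forall_exists_eq_add_smul (htors : Module.IsTorsionBy B M (t ^ m))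
    (g : N →ₗ[B] M) (hg : ∀ x, ∃ k y, x = g k + t • y) : Function.Surjective g := by
  have approx : ∀ n x, ∃ k y, x = g k + t ^ n • y := by
    intro n
    induction n with
    | zero => exact fun x ↦ ⟨0, x, by simp⟩
    | succ n ih =>
      intro x
      obtain ⟨k, y, rfl⟩ := ih x
      obtain ⟨k', y', rfl⟩ := hg y
      exact ⟨k + t ^ n • k', y', by simp only [map_add, map_smul, smul_add, pow_succ, mul_smul,
        add_assoc]⟩
  intro x
  obtain ⟨k, y, rfl⟩ := approx m x
  exact ⟨k, by rw [htors, add_zero]⟩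

theorem LinearMap.injective_of_forall_exists_eq_smul (htors : Module.IsTorsionBy B N (t ^ m))
    (hM : ∀ n < m, ∀ x : M, t ^ n • x = 0 → ∃ y, x = t • y)
    (g : N →ₗ[B] M) (hg : ∀ k, (∃ y, g k = t • y) → ∃ k', k = t • k') :
    Function.Injective g := by
  refine (injective_iff_map_eq_zero g).2 fun k hk ↦ ?_
  have divisible : ∀ n ≤ m, ∃ w, k = t ^ n • w := by
    intro n
    induction n with
    | zero => exact fun _ ↦ ⟨k, by simp⟩
    | succ n ih =>
      intro hn
      obtain ⟨w, rfl⟩ := ih (by omega)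
      obtain ⟨y, hy⟩ := hM n (by omega) (g w) (by rw [← map_smul, hk])
      obtain ⟨w', rfl⟩ := hg w ⟨y, hy⟩
      exact ⟨w', by rw [pow_succ, mul_smul]⟩
  obtain ⟨w, rfl⟩ := divisible m le_rfl
  exact @htors w

theorem Module.Finite.of_finite_quotient_smul_top
    (htors : Module.IsTorsionBy B M (t ^ m))
    [Module.Finite (B ⧸ Ideal.span {t}) (M ⧸ (Ideal.span {t} • ⊤ : Submodule B M))] :
    Module.Finite B M := by
  have : Module.Finite B (M ⧸ (Ideal.span {t} • ⊤ : Submodule B M)) :=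
    .trans (B ⧸ Ideal.span {t}) _
  obtain ⟨r, p, hp⟩ := Module.Finite.exists_fin' B (M ⧸ (Ideal.span {t} • ⊤ : Submodule B M))
  obtain ⟨g, hg⟩ := Module.projective_lifting_property (mkQ _) p (mkQ_surjective _)
  refine .of_surjective g (g.surjective_of_forall_exists_eq_add_smul htors fun x ↦ ?_)
  obtain ⟨v, hv⟩ := hp (mkQ _ x)
  obtain ⟨y, hy⟩ := mem_ideal_span_singleton_smul_top.1 <|
    (Submodule.Quotient.eq _).1 (hv.symm.trans (LinearMap.congr_fun hg v).symm)
  exact ⟨v, y, by rw [← hy, add_sub_cancel]⟩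

end NilpotentScalar

section Lifting

variable {R F : Type*} [CommRing R] [Algebra B R] [AddCommGroup F] [Module R F] [Module B F]
  [IsScalarTower B R F]

variable (R F) in
def Module.End.mapQSMulTop (I : Ideal B) :
    Module.End R F →+* Module.End B (F ⧸ (I • ⊤ : Submodule B F)) where
  toFun φ := mapQ _ _ (φ.restrictScalars B) (smul_top_le_comap_smul_top I _)
  map_one' := by ext; rfl
  map_mul' _ _ := by ext; rfl
  map_zero' := by ext; rfl
  map_add' _ _ := by ext; rfl

theorem Module.End.mapQSMulTop_mk (I : Ideal B) (φ : Module.End R F) (v : F) :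
    mapQSMulTop R F I φ (Submodule.Quotient.mk v) = Submodule.Quotient.mk (φ v) :=
  rfl

theorem Module.End.isNilpotent_of_mapQSMulTop_eq_zero (htors : algebraMap B R (t ^ m) = 0)
    {φ : Module.End R F} (hφ : mapQSMulTop R F (Ideal.span {t}) φ = 0) : IsNilpotent φ := by
  have divisible : ∀ n v, ∃ w, (φ ^ n) v = t ^ n • w := by
    intro n
    induction n with
    | zero => exact fun v ↦ ⟨v, by simp⟩
    | succ n ih =>
      intro v
      obtain ⟨w, hw⟩ := ih v
      obtain ⟨w', hw' : φ w = t • w'⟩ := mem_ideal_span_singleton_smul_top.1 <|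
        (Submodule.Quotient.mk_eq_zero _).1 (LinearMap.congr_fun hφ (Submodule.Quotient.mk w))
      refine ⟨w', ?_⟩
      rw [pow_succ', Module.End.mul_apply, hw, LinearMap.map_smul_of_tower, hw', pow_succ, mul_smul]
  refine ⟨m, LinearMap.ext fun v ↦ ?_⟩
  obtain ⟨w, hw⟩ := divisible m v
  rw [hw, ← algebraMap_smul R, htors, zero_smul, LinearMap.zero_apply]

theorem Module.End.mem_range_mapQSMulTop [Module.Free R F]
    (hB : Function.Surjective (algebraMap B R)) (I : Ideal B)
    (ψ : Module.End B (F ⧸ (I • ⊤ : Submodule B F))) : ψ ∈ (mapQSMulTop R F I).range := by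
  let b := Module.Free.chooseBasis R F
  choose lift hlift using mkQ_surjective (I • ⊤ : Submodule B F)
  refine ⟨b.constr ℕ fun i ↦ lift (ψ (Submodule.Quotient.mk (b i))), linearMap_qext _ ?_⟩
  have hspan : span B (Set.range b) = ⊤ := by
    rw [← restrictScalars_span B R hB, b.span_eq, restrictScalars_top]
  refine LinearMap.ext_on_range hspan fun i ↦ ?_
  simpa [mapQSMulTop_mk] using hlift _

theorem Module.End.exists_isIdempotentElem_mapQSMulTop_eq [Module.Free R F]
    (hB : Function.Surjective (algebraMap B R)) (htors : algebraMap B R (t ^ m) = 0)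
    (e₀ : Module.End B (F ⧸ (Ideal.span {t} • ⊤ : Submodule B F))) (he₀ : IsIdempotentElem e₀) :
    ∃ e : Module.End R F, IsIdempotentElem e ∧ mapQSMulTop R F (Ideal.span {t}) e = e₀ :=
  exists_isIdempotentElem_eq_of_ker_isNilpotent _
    (fun _ hφ ↦ isNilpotent_of_mapQSMulTop_eq_zero htors hφ) e₀ (mem_range_mapQSMulTop hB _ e₀) he₀

variable {M : Type*} [AddCommGroup M] [Module R M] [Module B M] [IsScalarTower B R M]

theorem LinearMap.exists_isIdempotentElem_splitting_mod_smul [Module.Free R F]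
    [Module.Projective (B ⧸ Ideal.span {t}) (M ⧸ (Ideal.span {t} • ⊤ : Submodule B M))]
    (hB : Function.Surjective (algebraMap B R)) (htors : algebraMap B R (t ^ m) = 0)
    (f : F →ₗ[R] M) (hf : Function.Surjective f) :
    ∃ e : Module.End R F, IsIdempotentElem e ∧ (∀ v, ∃ y, f (e v) = f v + t • y) ∧
      ∀ v, (∃ y, f v = t • y) → ∃ w, e v = t • w := by
  let fbar : (F ⧸ (Ideal.span {t} • ⊤ : Submodule B F)) →ₗ[B ⧸ Ideal.span {t}]
      M ⧸ (Ideal.span {t} • ⊤ : Submodule B M) :=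
    LinearMap.extendScalarsOfSurjective Ideal.Quotient.mk_surjective
      (mapQ _ _ (f.restrictScalars B) (smul_top_le_comap_smul_top _ _))
  have hfbar (v : F) : fbar (Submodule.Quotient.mk v) = Submodule.Quotient.mk (f v) := rfl
  have fbar_surjective : Function.Surjective fbar := by
    intro y
    obtain ⟨x, rfl⟩ := Submodule.mkQ_surjective _ y
    obtain ⟨v, rfl⟩ := hf x
    exact ⟨_, hfbar v⟩
  obtain ⟨s, hs⟩ :=
    fbar.exists_rightInverse_of_surjective (LinearMap.range_eq_top.2 fbar_surjective)
  have hs' (y) : fbar (s y) = y := LinearMap.congr_fun hs y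
  obtain ⟨e, he, he_mod⟩ := Module.End.exists_isIdempotentElem_mapQSMulTop_eq hB htors
    ((s ∘ₗ fbar).restrictScalars B) (by ext x; simp [hs'])
  have he_mk (v : F) : Submodule.Quotient.mk (e v) = s (fbar (Submodule.Quotient.mk v)) :=
    LinearMap.congr_fun he_mod (Submodule.Quotient.mk v)
  refine ⟨e, he, fun v ↦ ?_, fun v hv ↦ ?_⟩
  · have : (Submodule.Quotient.mk (f (e v)) : M ⧸ (Ideal.span {t} • ⊤ : Submodule B M)) =
        Submodule.Quotient.mk (f v) := by
      rw [← hfbar, he_mk, hs', hfbar]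
    obtain ⟨y, hy⟩ := mem_ideal_span_singleton_smul_top.1 ((Submodule.Quotient.eq _).1 this)
    exact ⟨y, eq_add_of_sub_eq' hy⟩
  · refine mem_ideal_span_singleton_smul_top.1 ((Submodule.Quotient.mk_eq_zero _).1 ?_)
    rw [he_mk, hfbar, (Submodule.Quotient.mk_eq_zero _).2 (mem_ideal_span_singleton_smul_top.2 hv),
      map_zero]

theorem Module.IsTorsionBy.of_algebraMap_eq_zero {s : B} (hs : algebraMap B R s = 0) :
    Module.IsTorsionBy B M s := fun x ↦ by rw [← algebraMap_smul R, hs, zero_smul]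

theorem Module.Projective.of_projective_quotient_smul_top
    [Module.Finite R M]
    [Module.Projective (B ⧸ Ideal.span {t}) (M ⧸ (Ideal.span {t} • ⊤ : Submodule B M))]
    (hB : Function.Surjective (algebraMap B R)) (htors : algebraMap B R (t ^ m) = 0)
    (hM : ∀ n < m, ∀ x : M, t ^ n • x = 0 → ∃ y, x = t • y) : Module.Projective R M := by
  obtain ⟨r, f, hf⟩ := Module.Finite.exists_fin' R M
  obtain ⟨e, he, hfe, hef⟩ := f.exists_isIdempotentElem_splitting_mod_smul hB htors hf
  let K := LinearMap.range e
  have : Module.Projective R K := .of_split K.subtype e.rangeRestrict <|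
    LinearMap.ext fun ⟨_, u, rfl⟩ ↦ Subtype.ext (LinearMap.congr_fun he.eq u)
  let g := f ∘ₗ K.subtype
  have g_injective : Function.Injective g := by
    refine (g.restrictScalars B).injective_of_forall_exists_eq_smul
      (IsTorsionBy.of_algebraMap_eq_zero htors) hM ?_
    rintro ⟨_, u, rfl⟩ hu
    obtain ⟨w, hw⟩ := hef (e u) hu
    refine ⟨⟨e w, w, rfl⟩, Subtype.ext ?_⟩
    have he_idem : ∀ v, e (e v) = e v := LinearMap.congr_fun he.eq
    calc e u = e (e (e u)) := by rw [he_idem, he_idem]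
      _ = t • e w := by rw [hw, LinearMap.map_smul_of_tower]
  have g_surjective : Function.Surjective g := by
    refine (g.restrictScalars B).surjective_of_forall_exists_eq_add_smul
      (IsTorsionBy.of_algebraMap_eq_zero htors) fun x ↦ ?_
    obtain ⟨v, rfl⟩ := hf x
    obtain ⟨y, hy⟩ := hfe v
    exact ⟨⟨e v, v, rfl⟩, -y, by simp [g, hy]⟩
  exact .of_equiv (LinearEquiv.ofBijective g ⟨g_injective, g_surjective⟩)

end Lifting

end

theorem finite_projective_of_finite_projective_mod_t_general {B : Type*} [CommRing B] (t : B)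
    (m : ℕ)
    {M : Type*} [AddCommGroup M] [Module B M]
    (htors : Module.IsTorsionBy B M (t ^ m))
    (hfin : Module.Finite (B ⧸ Ideal.span {t})
      (M ⧸ (Ideal.span {t} • ⊤ : Submodule B M)))
    (hproj : Module.Projective (B ⧸ Ideal.span {t})
      (M ⧸ (Ideal.span {t} • ⊤ : Submodule B M)))
    (hiso : ∀ n < m, ∀ x : M, (∃ y : M, t ^ n • x = t ^ (n + 1) • y) →
        ∃ y : M, x = t • y) :
    letI : Module (B ⧸ Ideal.span {t ^ m}) M := htors.module
    Module.Finite (B ⧸ Ideal.span {t ^ m}) M ∧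
      Module.Projective (B ⧸ Ideal.span {t ^ m}) M := by
  let _ : Module (B ⧸ Ideal.span {t ^ m}) M := htors.module
  have : IsScalarTower B (B ⧸ Ideal.span {t ^ m}) M :=
    ((Module.isTorsionBySet_span_singleton_iff _).2 htors).isScalarTower
  have : Module.Finite B M := .of_finite_quotient_smul_top htors
  have : Module.Finite (B ⧸ Ideal.span {t ^ m}) M := .of_restrictScalars_finite B _ M
  refine ⟨this, .of_projective_quotient_smul_top Ideal.Quotient.mk_surjective
    (Ideal.Quotient.eq_zero_iff_mem.2 (Ideal.mem_span_singleton_self _)) fun n hn x hx ↦ ?_⟩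
  exact hiso n hn x ⟨0, by rw [hx, smul_zero]⟩

/-- Let `B` be a commutative ring with a non-zero divisor `t` and `m ≥ 1`. Let `M` be
a `B_m = B/t^m`-module (i.e. a `B`-module killed by `t^m`) such that `M/tM` is a
finite projective module over `B₁ = B/t`, and such that for every `0 ≤ n ≤ m−1`
multiplication by `tⁿ` induces an isomorphism of `B₁`-modules `M/tM ≅ tⁿM/t^{n+1}M`
(surjectivity of the induced map being automatic, this says `tⁿ•x ∈ t^{n+1}M` implies
`x ∈ tM`). Then `M` is a finite projective `B_m`-module. -/
theorem finite_projective_of_finite_projective_mod_t {B : Type*} [CommRing B] (t : B)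
    (ht : t ∈ nonZeroDivisors B) (m : ℕ) (hm : 1 ≤ m)
    {M : Type*} [AddCommGroup M] [Module B M]
    (htors : Module.IsTorsionBy B M (t ^ m))
    (hfin : Module.Finite (B ⧸ Ideal.span {t})
      (M ⧸ (Ideal.span {t} • ⊤ : Submodule B M)))
    (hproj : Module.Projective (B ⧸ Ideal.span {t})
      (M ⧸ (Ideal.span {t} • ⊤ : Submodule B M)))
    (hiso : ∀ n < m, ∀ x : M, (∃ y : M, t ^ n • x = t ^ (n + 1) • y) →
        ∃ y : M, x = t • y) :
    letI : Module (B ⧸ Ideal.span {t ^ m}) M := htors.module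
    Module.Finite (B ⧸ Ideal.span {t ^ m}) M ∧
      Module.Projective (B ⧸ Ideal.span {t ^ m}) M :=
  finite_projective_of_finite_projective_mod_t_general t m htors hfin hproj hiso
end

section
/- Let B be a commutative ring with a non-zero divisor t such that B is t-adically complete. Let M be a t-adically complete and separated B-module such that M/tM is a finite projective B/t-module and such that for every n ≥ 0 the multiplication by tⁿ induces an isomorphism of B/t-modules M/tM ≅ tⁿM/t^{n+1}M. Then M is a finite projective B-module. -/
/-!
Lift generators of `M/tM` to a surjection `π : Bʳ → M`. The condition on multiplication by `tⁿ`,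
together with separatedness, makes `t` a non-zero-divisor on `M`; hence `K = ker π` satisfies
`K ∩ tⁿBʳ = tⁿK` and is `t`-adically complete. Projectivity of `M/tM` gives `ρ₀ : Bʳ → K` which is
the identity on `K` modulo `tK`. An endomorphism of a complete module that is the identity
modulo `t` is invertible (geometric series), so `(ρ₀|_K)⁻¹ ∘ ρ₀` retracts `Bʳ` onto `K` and `M` is
a direct summand of `Bʳ`.
-/

section TAdic

variable {B : Type*} [CommRing B] (t : B) {M : Type*} [AddCommGroup M] [Module B M]

theorem mem_span_singleton_pow_smul_top_iff (n : ℕ) (x : M) :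
    x ∈ (Ideal.span {t} ^ n • ⊤ : Submodule B M) ↔ ∃ y, x = t ^ n • y := by
  rw [Ideal.span_singleton_pow, Submodule.ideal_span_singleton_smul, ← SetLike.mem_coe,
    Submodule.coe_pointwise_smul]
  simp [Set.mem_smul_set, eq_comm]

theorem mem_span_singleton_smul_top_iff (x : M) :
    x ∈ (Ideal.span {t} • ⊤ : Submodule B M) ↔ ∃ y, x = t • y := by
  simpa using mem_span_singleton_pow_smul_top_iff t 1 x

theorem smodEq_span_singleton_pow_iff (n : ℕ) (x y : M) :
    x ≡ y [SMOD (Ideal.span {t} ^ n • ⊤ : Submodule B M)] ↔ ∃ z, x - y = t ^ n • z := by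
  rw [SModEq.sub_mem, mem_span_singleton_pow_smul_top_iff]

theorem eq_zero_of_forall_exists_eq_pow_smul [IsHausdorff (Ideal.span {t}) M] {x : M}
    (h : ∀ n, ∃ y, x = t ^ n • y) : x = 0 :=
  IsHausdorff.haus ‹_› x fun n ↦ by
    rw [SModEq.zero, mem_span_singleton_pow_smul_top_iff]; exact h n

theorem isPrecomplete_span_singleton_iff :
    IsPrecomplete (Ideal.span {t}) M ↔ ∀ f : ℕ → M, (∀ {m n}, m ≤ n → ∃ z, f m - f n = t ^ m • z) →
      ∃ L, ∀ n, ∃ z, f n - L = t ^ n • z := by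
  simp only [isPrecomplete_iff, smodEq_span_singleton_pow_iff]

theorem exists_forall_sub_sum_eq_pow_smul [IsPrecomplete (Ideal.span {t}) M] (a : ℕ → M) :
    ∃ L, ∀ n, ∃ y, L - ∑ j ∈ Finset.range n, t ^ j • a j = t ^ n • y := by
  obtain ⟨L, hL⟩ := (isPrecomplete_span_singleton_iff t).mp ‹_›
    (fun n ↦ ∑ j ∈ Finset.range n, t ^ j • a j) fun {m n} hmn ↦ by
      obtain ⟨k, rfl⟩ := Nat.exists_eq_add_of_le hmn
      refine ⟨-∑ j ∈ Finset.range k, t ^ j • a (m + j), ?_⟩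
      simp [Finset.sum_range_add, pow_add, mul_smul, Finset.smul_sum]
  refine ⟨L, fun n ↦ ?_⟩
  obtain ⟨y, hy⟩ := hL n
  exact ⟨-y, by rw [← neg_sub, hy, smul_neg]⟩

instance IsHausdorff.pi_span_singleton {ι : Type*} [IsHausdorff (Ideal.span {t}) M] :
    IsHausdorff (Ideal.span {t}) (ι → M) := by
  refine ⟨fun x hx ↦ _root_.funext fun i ↦ eq_zero_of_forall_exists_eq_pow_smul t fun n ↦ ?_⟩
  obtain ⟨y, hy⟩ := (mem_span_singleton_pow_smul_top_iff t n x).mp (SModEq.zero.mp (hx n))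
  exact ⟨y i, congrFun hy i⟩

instance IsPrecomplete.pi_span_singleton {ι : Type*} [IsPrecomplete (Ideal.span {t}) M] :
    IsPrecomplete (Ideal.span {t}) (ι → M) := by
  refine (isPrecomplete_span_singleton_iff t).mpr fun f hf ↦ ?_
  have hcoord (i : ι) : ∃ L, ∀ n, ∃ z, f n i - L = t ^ n • z :=
    (isPrecomplete_span_singleton_iff t).mp ‹_› (f · i) fun hmn ↦ by
      obtain ⟨z, hz⟩ := hf hmn
      exact ⟨z i, congrFun hz i⟩
  choose L hL using hcoord
  refine ⟨L, fun n ↦ ?_⟩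
  choose z hz using fun i ↦ hL i n
  exact ⟨z, funext hz⟩

instance IsAdicComplete.pi_span_singleton {ι : Type*} [IsAdicComplete (Ideal.span {t}) M] :
    IsAdicComplete (Ideal.span {t}) (ι → M) where

theorem isSMulRegular_of_pow_smul_eq_pow_succ_smul [IsHausdorff (Ideal.span {t}) M]
    (h : ∀ n : ℕ, ∀ x : M, (∃ y : M, t ^ n • x = t ^ (n + 1) • y) → ∃ y : M, x = t • y) :
    IsSMulRegular M t := by
  refine (isSMulRegular_iff_right_eq_zero_of_smul).mpr fun x hx ↦ ?_
  have key (k : ℕ) : ∃ y, x = t ^ k • y ∧ t ^ (k + 1) • y = 0 := by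
    induction k with
    | zero => exact ⟨x, by simpa using hx⟩
    | succ k ih =>
      obtain ⟨y, rfl, hy⟩ := ih
      obtain ⟨y', rfl⟩ := h (k + 1) y ⟨0, by rw [hy, smul_zero]⟩
      refine ⟨y', by rw [smul_smul, ← pow_succ], ?_⟩
      rwa [smul_smul, ← pow_succ] at hy
  exact eq_zero_of_forall_exists_eq_pow_smul t fun n ↦ (key n).imp fun _ ↦ And.left

theorem exists_pow_apply_eq_pow_smul (v : Module.End B M) (hv : ∀ x, ∃ y, v x = t • y)
    (n : ℕ) (x : M) : ∃ y, (v ^ n) x = t ^ n • y := by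
  induction n generalizing x with
  | zero => exact ⟨x, by simp⟩
  | succ n ih =>
    obtain ⟨y, hy⟩ := hv x
    obtain ⟨z, hz⟩ := ih y
    exact ⟨z, by rw [pow_succ, Module.End.mul_apply, hy, map_smul, hz, smul_smul, ← pow_succ']⟩

theorem bijective_of_forall_sub_apply_eq_smul [IsAdicComplete (Ideal.span {t}) M]
    (u : Module.End B M) (hu : ∀ x, ∃ y, x - u x = t • y) : Function.Bijective u := by
  set v := 1 - u
  have hvn := exists_pow_apply_eq_pow_smul t v hu
  have hu_eq : u = 1 - v := by simp [v]
  constructor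
  · refine (injective_iff_map_eq_zero u).mpr fun x hx ↦ ?_
    have hfix (n : ℕ) : (v ^ n) x = x := by
      induction n with
      | zero => rfl
      | succ n ih => rw [pow_succ, Module.End.mul_apply, show v x = x by simp [v, hx], ih]
    exact eq_zero_of_forall_exists_eq_pow_smul t fun n ↦ by simpa [hfix n] using hvn n x
  · -- the preimage of `x` is `∑ⱼ vʲ x`, which converges since `vʲ x ∈ tʲM`
    intro x
    choose a ha using fun j ↦ hvn j x
    obtain ⟨L, hL⟩ := exists_forall_sub_sum_eq_pow_smul t a
    refine ⟨L, sub_eq_zero.mp (eq_zero_of_forall_exists_eq_pow_smul t fun n ↦ ?_)⟩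
    obtain ⟨y, hy⟩ := hL n
    have hsum : ∑ j ∈ Finset.range n, t ^ j • a j = (∑ j ∈ Finset.range n, v ^ j) x := by
      simp [LinearMap.sum_apply, ha]
    have hgeom : u ((∑ j ∈ Finset.range n, v ^ j) x) = x - (v ^ n) x := by
      rw [hu_eq, ← Module.End.mul_apply, mul_neg_geom_sum]; simp
    refine ⟨u y - a n, ?_⟩
    rw [smul_sub, ← map_smul, ← hy, ← ha, map_sub, hsum, hgeom]
    abel

end TAdic

section Kernel

variable {B : Type*} [CommRing B] (t : B) {F M : Type*} [AddCommGroup F] [Module B F]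
  [AddCommGroup M] [Module B M]

theorem isAdicComplete_ker [IsAdicComplete (Ideal.span {t}) F] [IsHausdorff (Ideal.span {t}) M]
    (π : F →ₗ[B] M) (hM : IsSMulRegular M t) :
    IsAdicComplete (Ideal.span {t}) (LinearMap.ker π) where
  toIsHausdorff := ⟨fun k hk ↦ Subtype.ext <| eq_zero_of_forall_exists_eq_pow_smul t fun n ↦ by
    obtain ⟨y, hy⟩ := (mem_span_singleton_pow_smul_top_iff t n k).mp (SModEq.zero.mp (hk n))
    exact ⟨y, congrArg Subtype.val hy⟩⟩
  toIsPrecomplete := by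
    refine (isPrecomplete_span_singleton_iff t).mpr fun f hf ↦ ?_
    obtain ⟨L, hL⟩ := (isPrecomplete_span_singleton_iff (M := F) t).mp inferInstance
      (fun n ↦ (f n : F)) fun hmn ↦ by
        obtain ⟨z, hz⟩ := hf hmn
        exact ⟨z, congrArg Subtype.val hz⟩
    choose z hz using hL
    have hπz (n : ℕ) : t ^ n • π (z n) = - π L := by
      rw [← map_smul, ← hz, map_sub, (f n).2, zero_sub]
    have hL : π L = 0 := neg_eq_zero.mp <| eq_zero_of_forall_exists_eq_pow_smul t
      fun n ↦ ⟨π (z n), (hπz n).symm⟩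
    have hzK (n : ℕ) : π (z n) = 0 := (hM.pow n).right_eq_zero_of_smul (by rw [hπz, hL, neg_zero])
    exact ⟨⟨L, hL⟩, fun n ↦ ⟨⟨z n, hzK n⟩, Subtype.ext (hz n)⟩⟩

theorem exists_linearMap_ker_sub_mem_smul_top [Module.Projective B F] (π : F →ₗ[B] M)
    (hπ : Function.Surjective π)
    (hproj : Module.Projective (B ⧸ Ideal.span {t}) (M ⧸ (Ideal.span {t} • ⊤ : Submodule B M))) :
    ∃ ρ₀ : F →ₗ[B] LinearMap.ker π,
      ∀ k : LinearMap.ker π, (k : F) - ρ₀ k ∈ (Ideal.span {t} • ⊤ : Submodule B F) := by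
  set p := π.reduceModIdeal (Ideal.span {t})
  set mk := (Ideal.span {t} • ⊤ : Submodule B F).mkQ
  have hp : Function.Surjective p := by
    intro m
    obtain ⟨x, rfl⟩ := Submodule.mkQ_surjective _ m
    obtain ⟨f, rfl⟩ := hπ x
    exact ⟨mk f, rfl⟩
  obtain ⟨s, hs⟩ := Module.projective_lifting_property p LinearMap.id hp
  set e := mk ∘ₗ (LinearMap.ker π).subtype
  have hrange (x : F) : mk x - s (p (mk x)) ∈ LinearMap.range e := by
    obtain ⟨f, hf⟩ := Submodule.mkQ_surjective _ (mk x - s (p (mk x)))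
    have hpf : π f ∈ (Ideal.span {t} • ⊤ : Submodule B M) := by
      rw [← Submodule.Quotient.mk_eq_zero]
      change p (mk f) = 0
      rw [show mk f = _ from hf, map_sub, ← LinearMap.comp_apply p s, hs, LinearMap.id_apply,
        sub_self]
    obtain ⟨y, hy⟩ := (mem_span_singleton_smul_top_iff t _).mp hpf
    obtain ⟨g, rfl⟩ := hπ y
    refine ⟨⟨f - t • g, by simp [hy]⟩, ?_⟩
    rw [← hf]
    simp only [e, mk, LinearMap.comp_apply, Submodule.coe_subtype, Submodule.mkQ_apply,
      Submodule.Quotient.mk_sub, sub_eq_self, Submodule.Quotient.mk_eq_zero,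
      mem_span_singleton_smul_top_iff]
    exact ⟨g, rfl⟩
  obtain ⟨ρ₀, hρ₀⟩ := Module.projective_lifting_property e.rangeRestrict
    (LinearMap.codRestrict _
      ((LinearMap.id - (s.restrictScalars B) ∘ₗ (p.restrictScalars B)) ∘ₗ mk) hrange)
    e.surjective_rangeRestrict
  refine ⟨ρ₀, fun k ↦ ?_⟩
  have hk : mk (ρ₀ k) = mk k - s (p (mk k)) := congrArg Subtype.val (LinearMap.congr_fun hρ₀ k)
  have hpk : p (mk k) = 0 := by
    simp [p, mk, LinearMap.mem_ker.mp k.2]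
  rw [← Submodule.Quotient.mk_eq_zero, Submodule.Quotient.mk_sub]
  change mk k - mk (ρ₀ k) = 0
  rw [hk, hpk, map_zero, sub_zero, sub_self]

theorem exists_retraction_subtype_ker [IsAdicComplete (Ideal.span {t}) F]
    [Module.Projective B F] [IsHausdorff (Ideal.span {t}) M] (π : F →ₗ[B] M)
    (hπ : Function.Surjective π) (hM : IsSMulRegular M t)
    (hproj : Module.Projective (B ⧸ Ideal.span {t}) (M ⧸ (Ideal.span {t} • ⊤ : Submodule B M))) :
    ∃ ρ : F →ₗ[B] LinearMap.ker π, ρ ∘ₗ (LinearMap.ker π).subtype = LinearMap.id := by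
  have := isAdicComplete_ker t π hM
  obtain ⟨ρ₀, hρ₀⟩ := exists_linearMap_ker_sub_mem_smul_top t π hπ hproj
  have hu (k : LinearMap.ker π) : ∃ y, k - (ρ₀ ∘ₗ (LinearMap.ker π).subtype) k = t • y := by
    obtain ⟨f, hf⟩ := (mem_span_singleton_smul_top_iff t _).mp (hρ₀ k)
    have hπf : π f = 0 := hM.right_eq_zero_of_smul <| by
      rw [← map_smul, ← hf, map_sub, LinearMap.mem_ker.mp k.2, LinearMap.mem_ker.mp (ρ₀ k).2,
        sub_zero]
    exact ⟨⟨f, hπf⟩, Subtype.ext hf⟩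
  let u := LinearEquiv.ofBijective _ (bijective_of_forall_sub_apply_eq_smul t _ hu)
  exact ⟨u.symm.toLinearMap ∘ₗ ρ₀, LinearMap.ext u.symm_apply_apply⟩

end Kernel

theorem exists_fin_surjective_of_finite_quotient {B : Type*} [CommRing B] (t : B)
    [IsPrecomplete (Ideal.span {t}) B] {M : Type*} [AddCommGroup M] [Module B M]
    [IsHausdorff (Ideal.span {t}) M]
    (hfin : Module.Finite (B ⧸ Ideal.span {t}) (M ⧸ (Ideal.span {t} • ⊤ : Submodule B M))) :
    ∃ (r : ℕ) (π : (Fin r → B) →ₗ[B] M), Function.Surjective π := by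
  have := Module.Finite.trans (R := B) (B ⧸ Ideal.span {t})
    (M ⧸ (Ideal.span {t} • ⊤ : Submodule B M))
  obtain ⟨r, g, hg⟩ := Module.Finite.exists_fin' B (M ⧸ (Ideal.span {t} • ⊤ : Submodule B M))
  obtain ⟨π, hπ⟩ :=
    Module.projective_lifting_property (Submodule.mkQ _) g (Submodule.mkQ_surjective _)
  exact ⟨r, π, surjective_of_mkQ_comp_surjective (hπ ▸ hg)⟩

theorem finite_projective_of_complete_general {B : Type*} [CommRing B] (t : B)
    [IsAdicComplete (Ideal.span {t}) B]
    {M : Type*} [AddCommGroup M] [Module B M]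
    [IsAdicComplete (Ideal.span {t}) M]
    (hfin : Module.Finite (B ⧸ Ideal.span {t})
      (M ⧸ (Ideal.span {t} • ⊤ : Submodule B M)))
    (hproj : Module.Projective (B ⧸ Ideal.span {t})
      (M ⧸ (Ideal.span {t} • ⊤ : Submodule B M)))
    (hiso : ∀ n : ℕ, ∀ x : M, (∃ y : M, t ^ n • x = t ^ (n + 1) • y) →
        ∃ y : M, x = t • y) :
    Module.Finite B M ∧ Module.Projective B M := by
  obtain ⟨r, π, hπ⟩ := exists_fin_surjective_of_finite_quotient t hfin
  have hM := isSMulRegular_of_pow_smul_eq_pow_succ_smul t hiso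
  obtain ⟨ρ, hρ⟩ := exists_retraction_subtype_ker t π hπ hM hproj
  have hsplit := (π.exact_subtype_ker_map.split_tfae Subtype.val_injective hπ).out 1 0
  obtain ⟨σ, hσ⟩ := hsplit.mp ⟨ρ, hρ⟩
  exact ⟨.of_surjective π hπ, .of_split σ π hσ⟩

/-- Let `B` be a commutative ring with a non-zero divisor `t` such that `B` is
`t`-adically complete. Let `M` be a `t`-adically complete and separated `B`-module
such that `M/tM` is a finite projective `B/t`-module and such that for every `n ≥ 0`
multiplication by `tⁿ` induces an isomorphism of `B/t`-modules `M/tM ≅ tⁿM/t^{n+1}M`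
(surjectivity of the induced map being automatic, this says `tⁿ•x ∈ t^{n+1}M` implies
`x ∈ tM`). Then `M` is a finite projective `B`-module. -/
theorem finite_projective_of_complete {B : Type*} [CommRing B] (t : B)
    (ht : t ∈ nonZeroDivisors B)
    [IsAdicComplete (Ideal.span {t}) B]
    {M : Type*} [AddCommGroup M] [Module B M]
    [IsAdicComplete (Ideal.span {t}) M]
    (hfin : Module.Finite (B ⧸ Ideal.span {t})
      (M ⧸ (Ideal.span {t} • ⊤ : Submodule B M)))
    (hproj : Module.Projective (B ⧸ Ideal.span {t})
      (M ⧸ (Ideal.span {t} • ⊤ : Submodule B M)))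
    (hiso : ∀ n : ℕ, ∀ x : M, (∃ y : M, t ^ n • x = t ^ (n + 1) • y) →
        ∃ y : M, x = t • y) :
    Module.Finite B M ∧ Module.Projective B M :=
  finite_projective_of_complete_general t hfin hproj hiso
end

section
/- Let S be a commutative ring and p a prime number which is a non-zero divisor on S. Suppose there exists ρ ∈ S and a unit u ∈ S× with ρ^p = u·p, and suppose that for every a ∈ S, if a^p ∈ ρ^p·S then a ∈ ρ·S. Then for every element x of the localization S[1/p], if x^p lies in the image of S in S[1/p], then x itself lies in the image of S. -/
/-!
Clearing the denominator of `x ∈ S[1/p]` gives `ρ ^ l * x ∈ S` for some `l`, because `ρ ^ p`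
is `p` up to a unit. If `l > 0`, write `ρ * y = s` with `y = ρ ^ (l - 1) * x`; then
`s ^ p = ρ ^ p * y ^ p ∈ ρ ^ p S`, so `s = ρ * s'`, and `y = s'` because `ρ` is a unit in
`S[1/p]`. Descending on `l` gives `x ∈ S`.
-/

section Descent

variable {S A : Type*} [CommRing S] [CommRing A] [Algebra S A] {n : ℕ} {ρ : S}

theorem mem_range_of_algebraMap_mul_mem_range (hinj : Function.Injective (algebraMap S A))
    (hρ : IsLeftRegular (algebraMap S A ρ))
    (hfrob : ∀ a : S, a ^ n ∈ Ideal.span {ρ ^ n} → a ∈ Ideal.span {ρ}) {y : A}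
    (hyn : y ^ n ∈ Set.range (algebraMap S A))
    (hρy : algebraMap S A ρ * y ∈ Set.range (algebraMap S A)) :
    y ∈ Set.range (algebraMap S A) := by
  obtain ⟨t, ht⟩ := hyn
  obtain ⟨s, hs⟩ := hρy
  have hsn : s ^ n = t * ρ ^ n :=
    hinj (by rw [map_pow, hs, map_mul, ht, map_pow, mul_pow, mul_comm])
  obtain ⟨s', rfl⟩ := Ideal.mem_span_singleton'.mp
    (hfrob s (Ideal.mem_span_singleton'.mpr ⟨t, hsn.symm⟩))
  exact ⟨s', hρ (show _ * _ = _ * _ by rw [← hs, map_mul, mul_comm])⟩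

theorem mem_range_of_pow_mul_mem_range (hinj : Function.Injective (algebraMap S A))
    (hρ : IsLeftRegular (algebraMap S A ρ))
    (hfrob : ∀ a : S, a ^ n ∈ Ideal.span {ρ ^ n} → a ∈ Ideal.span {ρ}) {x : A}
    (hxn : x ^ n ∈ Set.range (algebraMap S A)) {l : ℕ}
    (hl : algebraMap S A ρ ^ l * x ∈ Set.range (algebraMap S A)) :
    x ∈ Set.range (algebraMap S A) := by
  induction l with
  | zero => simpa using hl
  | succ l ih =>
    obtain ⟨t, ht⟩ := hxn
    refine ih (mem_range_of_algebraMap_mul_mem_range hinj hρ hfrob ⟨ρ ^ (l * n) * t, ?_⟩ ?_)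
    · rw [map_mul, ht, mul_pow, map_pow, pow_mul]
    · rwa [← mul_assoc, ← pow_succ']

end Descent

theorem IsLocalization.Away.exists_pow_mul_mem_range {S A : Type*} [CommRing S] [CommRing A]
    [Algebra S A] {r ρ : S} [IsLocalization.Away r A] {k : ℕ} (h : r ∣ ρ ^ k) (x : A) :
    ∃ l, algebraMap S A ρ ^ l * x ∈ Set.range (algebraMap S A) := by
  obtain ⟨c, hc⟩ := h
  obtain ⟨m, s, hs⟩ := IsLocalization.Away.surj r x
  refine ⟨k * m, c ^ m * s, ?_⟩
  rw [map_mul, map_pow, ← hs, pow_mul, ← map_pow (algebraMap S A) ρ k, hc, map_mul]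
  ring

/-- Let `S` be a commutative ring and `p` a prime which is a non-zero divisor on `S`.
Suppose `ρ ∈ S` and a unit `u` satisfy `ρ^p = u·p`, and that `a^p ∈ ρ^p·S` implies
`a ∈ ρ·S`. Then any `x ∈ S[1/p]` with `x^p` in the image of `S` lies itself in the
image of `S`. -/
theorem mem_range_of_pow_mem_range {S : Type*} [CommRing S] {p : ℕ} (hp : p.Prime)
    (hpnzd : (p : S) ∈ nonZeroDivisors S)
    (ρ : S) (u : Sˣ) (hρ : ρ ^ p = (u : S) * p)
    (hfrob : ∀ a : S, a ^ p ∈ Ideal.span {ρ ^ p} → a ∈ Ideal.span {ρ})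
    (x : Localization.Away (p : S))
    (hx : x ^ p ∈ Set.range (algebraMap S (Localization.Away (p : S)))) :
    x ∈ Set.range (algebraMap S (Localization.Away (p : S))) := by
  have hinj : Function.Injective (algebraMap S (Localization.Away (p : S))) :=
    IsLocalization.injective _ (Submonoid.powers_le.mpr hpnzd)
  have hρunit : IsUnit (algebraMap S (Localization.Away (p : S)) ρ) := by
    rw [← isUnit_pow_iff hp.ne_zero, ← map_pow, hρ, map_mul]
    exact (u.isUnit.map _).mul (IsLocalization.Away.algebraMap_isUnit _)
  obtain ⟨l, hl⟩ :=
    IsLocalization.Away.exists_pow_mul_mem_range (Dvd.intro_left _ hρ.symm) x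
  exact mem_range_of_pow_mul_mem_range hinj hρunit.isRegular.left hfrob hx hl
end

section
/- Let A be a commutative ring, p a prime number which is a non-zero divisor on A, and φ : A → A a ring automorphism. Let x, y, z ∈ A satisfy φ(x) = x^p·(1 + p·y), φ(z) = z^p, and x ≡ z (mod p). Then for every n ≥ 1, x ≡ z · ∏_{i=1}^{n} (1 + p·φ^{−i}(y))^{p^{i−1}} (mod p^{n+1}). -/
/-!
Write `σ = φ⁻¹` and `P n = ∏_{i<n} (1 + p·σ^{i+1}(y))^{p^i}`, so that
`P (n+1) = (1 + p·σ(y))·σ(P n)^p`. Applying `σ` to the hypotheses gives `x = σ(x)^p·(1 + p·σ(y))`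
and `z = σ(z)^p`, hence `x - z·P (n+1) = (σ(x)^p - (σ(z)·σ(P n))^p)·(1 + p·σ(y))`. By induction
`p^{n+1}` divides `σ(x) - σ(z)·σ(P n)`, and raising to the `p`-th power gains one more factor of `p`.
-/

open Finset

theorem pow_succ_dvd_pow_sub_pow_of_pow_dvd_sub {R : Type*} [CommRing R] {p k : ℕ} {a b : R}
    (hk : k ≠ 0) (h : (p : R) ^ k ∣ a - b) : (p : R) ^ (k + 1) ∣ a ^ p - b ^ p := by
  rw [← geom_sum₂_mul, pow_succ']
  exact mul_dvd_mul (dvd_geom_sum₂_self ((dvd_pow_self _ hk).trans h)) h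

section TeichmullerFactor

variable {A : Type*} [CommRing A] (φ : A ≃+* A) (p : ℕ) (y : A)

def teichmullerFactor (n : ℕ) : A :=
  ∏ i ∈ range n, (1 + (p : A) * ((⇑φ.symm)^[i + 1] y)) ^ p ^ i

theorem teichmullerFactor_succ (n : ℕ) :
    teichmullerFactor φ p y (n + 1) =
      (1 + (p : A) * φ.symm y) * φ.symm (teichmullerFactor φ p y n) ^ p := by
  simp only [teichmullerFactor, prod_range_succ', map_prod, ← prod_pow, map_pow, map_add, map_one,
    map_mul, map_natCast, ← pow_mul, ← pow_succ, ← Function.iterate_succ_apply' (⇑φ.symm)]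
  simp [mul_comm]

variable {φ p y}

theorem pow_succ_dvd_sub_mul_teichmullerFactor {x z : A} (hx : φ x = x ^ p * (1 + (p : A) * y))
    (hz : φ z = z ^ p) (hxz : (p : A) ∣ x - z) (n : ℕ) :
    (p : A) ^ (n + 1) ∣ x - z * teichmullerFactor φ p y n := by
  induction n with
  | zero => simpa [teichmullerFactor] using hxz
  | succ n ih =>
    have hx' : x = φ.symm x ^ p * (1 + (p : A) * φ.symm y) := by
      simpa using congrArg φ.symm hx
    have hz' : z = φ.symm z ^ p := by simpa using congrArg φ.symm hz
    have hσ : (p : A) ^ (n + 1) ∣ φ.symm x - φ.symm z * φ.symm (teichmullerFactor φ p y n) := by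
      simpa using map_dvd φ.symm ih
    convert (pow_succ_dvd_pow_sub_pow_of_pow_dvd_sub n.succ_ne_zero hσ).mul_right
      (1 + (p : A) * φ.symm y) using 1
    rw [teichmullerFactor_succ]
    linear_combination hx' - (1 + (p : A) * φ.symm y) * φ.symm (teichmullerFactor φ p y n) ^ p * hz'

end TeichmullerFactor

theorem teichmuller_factorization_congruence_general {A : Type*} [CommRing A] {p : ℕ}
    (φ : A ≃+* A) (x y z : A)
    (hx : φ x = x ^ p * (1 + (p : A) * y))
    (hz : φ z = z ^ p)
    (hxz : x - z ∈ Ideal.span {(p : A)}) :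
    ∀ n : ℕ, 1 ≤ n →
      x - z * ∏ i ∈ Finset.range n, (1 + (p : A) * ((⇑φ.symm)^[i + 1] y)) ^ p ^ i
        ∈ Ideal.span {(p : A) ^ (n + 1)} := fun n _ =>
  Ideal.mem_span_singleton.mpr <|
    pow_succ_dvd_sub_mul_teichmullerFactor hx hz (Ideal.mem_span_singleton.mp hxz) n

/-- Let `A` be a commutative ring, `p` a prime which is a non-zero divisor on `A`, and
`φ` a ring automorphism of `A`. If `φ(x) = x^p·(1 + p·y)`, `φ(z) = z^p` and
`x ≡ z (mod p)`, then for every `n ≥ 1`,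
`x ≡ z · ∏_{i=1}^{n} (1 + p·φ^{−i}(y))^{p^{i−1}}  (mod p^{n+1})`. -/
theorem teichmuller_factorization_congruence {A : Type*} [CommRing A] {p : ℕ}
    (hp : p.Prime) (hpnzd : (p : A) ∈ nonZeroDivisors A)
    (φ : A ≃+* A) (x y z : A)
    (hx : φ x = x ^ p * (1 + (p : A) * y))
    (hz : φ z = z ^ p)
    (hxz : x - z ∈ Ideal.span {(p : A)}) :
    ∀ n : ℕ, 1 ≤ n →
      x - z * ∏ i ∈ Finset.range n, (1 + (p : A) * ((⇑φ.symm)^[i + 1] y)) ^ p ^ i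
        ∈ Ideal.span {(p : A) ^ (n + 1)} :=
  teichmuller_factorization_congruence_general φ x y z hx hz hxz
end

section
/- Let F be a complete nonarchimedean normed field and a ∈ F with 0 < ‖a‖ < 1. Let b : ℕ → F be a sequence with b_n → 0. Define x : ℕ → F recursively by x₀ = 0 and x_{n+1} = a·(−b_n − n·x_n). Then x_n → 0, and moreover −n·x_n − a^{−1}·x_{n+1} = b_n for all n. -/
/-!
Since `‖n‖ ≤ 1`, the ultrametric inequality turns the recursion into
`‖x (n+1)‖ ≤ ‖a‖ · max ‖b n‖ ‖x n‖`. Once `‖b n‖ ≤ ε` this gives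
`‖x (N+k)‖ ≤ max ε (‖a‖ ^ k · ‖x N‖)`, and the second term tends to zero
because `‖a‖ < 1`.
-/

open Filter

theorem le_max_pow_mul_of_le_mul_max {r ε : ℝ} {u c : ℕ → ℝ} {N : ℕ}
    (hr0 : 0 ≤ r) (hr1 : r ≤ 1) (hε : 0 ≤ ε)
    (hu : ∀ n, u (n + 1) ≤ r * max (c n) (u n)) (hc : ∀ n ≥ N, c n ≤ ε) (k : ℕ) :
    u (k + N) ≤ max ε (r ^ k * u N) := by
  induction k with
  | zero => simp
  | succ k ih =>
    calc u (k + 1 + N) = u (k + N + 1) := by rw [Nat.add_right_comm]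
      _ ≤ r * max (c (k + N)) (u (k + N)) := hu _
      _ ≤ r * max ε (r ^ k * u N) :=
          mul_le_mul_of_nonneg_left (max_le (hc _ (Nat.le_add_left _ _) |>.trans
            (le_max_left _ _)) ih) hr0
      _ = max (r * ε) (r ^ (k + 1) * u N) := by
          rw [mul_max_of_nonneg _ _ hr0, pow_succ', mul_assoc]
      _ ≤ max ε (r ^ (k + 1) * u N) :=
          max_le_max_right _ (mul_le_of_le_one_left hε hr1)

theorem tendsto_zero_of_le_mul_max {r : ℝ} {u c : ℕ → ℝ} (hr0 : 0 ≤ r) (hr1 : r < 1)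
    (hu0 : ∀ n, 0 ≤ u n) (hu : ∀ n, u (n + 1) ≤ r * max (c n) (u n))
    (hc : Tendsto c atTop (nhds 0)) : Tendsto u atTop (nhds 0) := by
  refine tendsto_order.2
    ⟨fun δ hδ => .of_forall fun n => hδ.trans_le (hu0 n), fun ε hε => ?_⟩
  obtain ⟨N, hN⟩ := eventually_atTop.1 (hc.eventually (ge_mem_nhds (half_pos hε)))
  have hpow : ∀ᶠ k in atTop, r ^ k * u N < ε := by
    have := (tendsto_pow_atTop_nhds_zero_of_lt_one hr0 hr1).mul_const (u N)
    rw [zero_mul] at this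
    exact this.eventually (gt_mem_nhds hε)
  have htail : ∀ᶠ k in atTop, u (k + N) < ε := hpow.mono fun k hk =>
    (le_max_pow_mul_of_le_mul_max hr0 hr1.le (half_pos hε).le hu hN k).trans_lt
      (max_lt (half_lt_self hε) hk)
  exact tendsto_principal.1 <|
    (tendsto_add_atTop_iff_nat (f := u) N).1 (tendsto_principal (s := Set.Iio ε).2 htail)

theorem IsUltrametricDist.norm_mul_neg_sub_natCast_mul_le {F : Type*} [NormedField F]
    [IsUltrametricDist F] (a b y : F) (n : ℕ) :
    ‖a * (-b - n * y)‖ ≤ ‖a‖ * max ‖b‖ ‖y‖ := by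
  rw [norm_mul, ← neg_add', norm_neg]
  refine mul_le_mul_of_nonneg_left ((norm_add_le_max _ _).trans (max_le_max_left _ ?_))
    (norm_nonneg a)
  rw [norm_mul]
  exact mul_le_of_le_one_left (norm_nonneg y) (norm_natCast_le_one F n)

theorem recursive_solution_tendsto_zero_general {F : Type*} [NormedField F]
    (hna : IsNonarchimedean (norm : F → ℝ))
    (a : F) (ha0 : 0 < ‖a‖) (ha1 : ‖a‖ < 1)
    (b : ℕ → F) (hb : Tendsto b atTop (nhds 0))
    (x : ℕ → F)
    (hxrec : ∀ n : ℕ, x (n + 1) = a * (-b n - (n : F) * x n)) :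
    Tendsto x atTop (nhds 0) ∧
      ∀ n : ℕ, -(n : F) * x n - a⁻¹ * x (n + 1) = b n := by
  have := IsUltrametricDist.isUltrametricDist_of_isNonarchimedean_norm hna
  refine ⟨?_, fun n => ?_⟩
  · refine tendsto_zero_iff_norm_tendsto_zero.2 <|
      tendsto_zero_of_le_mul_max (norm_nonneg a) ha1 (fun n => norm_nonneg (x n)) (fun n => ?_)
        (tendsto_zero_iff_norm_tendsto_zero.1 hb)
    rw [hxrec]
    exact IsUltrametricDist.norm_mul_neg_sub_natCast_mul_le a (b n) (x n) n
  · rw [hxrec, inv_mul_cancel_left₀ (norm_pos_iff.1 ha0)]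
    ring

/-- Let `F` be a complete nonarchimedean normed field and `a ∈ F` with `0 < ‖a‖ < 1`.
Let `b : ℕ → F` be a null sequence and define `x` recursively by `x 0 = 0` and
`x (n+1) = a·(−b n − n·x n)`. Then `x n → 0` and `−n·x n − a⁻¹·x (n+1) = b n` for
all `n`. -/
theorem recursive_solution_tendsto_zero {F : Type*} [NormedField F] [CompleteSpace F]
    (hna : IsNonarchimedean (norm : F → ℝ))
    (a : F) (ha0 : 0 < ‖a‖) (ha1 : ‖a‖ < 1)
    (b : ℕ → F) (hb : Tendsto b atTop (nhds 0))
    (x : ℕ → F) (hx0 : x 0 = 0)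
    (hxrec : ∀ n : ℕ, x (n + 1) = a * (-b n - (n : F) * x n)) :
    Tendsto x atTop (nhds 0) ∧
      ∀ n : ℕ, -(n : F) * x n - a⁻¹ * x (n + 1) = b n :=
  recursive_solution_tendsto_zero_general hna a ha0 ha1 b hb x hxrec
end

section
/- Let R be a commutative ℚ-algebra, M an R-module, and γ : M → M an R-linear automorphism such that γ − id is nilpotent (i.e. (γ − id)^k = 0 for some k). Extend γ to an R[W]-semilinear automorphism γ̃ of M[W] := M ⊗_R R[W] by γ̃(m ⊗ f(W)) = γ(m) ⊗ f(W+1). Then the evaluation map W ↦ 0, M[W] → M, restricts to an R-module isomorphism from the fixed points {x ∈ M[W] : γ̃(x) = x} onto M; its inverse sends v ∈ M to Σ_{n≥0} binom(W, n)·(γ^{−1} − 1)ⁿ(v), where binom(W,n) = W(W−1)⋯(W−n+1)/n! ∈ ℚ[W] (a finite sum by nilpotence). -/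
/-!
A fixed point `z` of `γ̃` satisfies `z(r) = γ (z(r + 1))`, so `z(0) = 0` forces `z` to vanish at
every natural number; over a `ℚ`-algebra the Vandermonde matrix of `0, 1, …, d` is invertible, so
`z = 0`. Conversely, with `δ = γ⁻¹ - 1` we have `γ (u + δ u) = u`, and Pascal's rule
`binom(W + 1, n + 1) = binom(W, n + 1) + binom(W, n)` makes `γ̃ (Σ binom(W, n) • δⁿ v)` telescope
back to the same sum once `δᵏ v = 0`; `δ = -γ⁻¹ (γ - 1)` is nilpotent because `γ - 1` is.
-/

open Polynomial Finset

theorem prod_range_X_sub_C_eq_descPochhammer (R : Type*) [CommRing R] (n : ℕ) :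
    ∏ i ∈ range n, (X - C (i : R)) = descPochhammer R n := by
  induction n with
  | zero => simp
  | succ n ih => rw [prod_range_succ, ih, descPochhammer_succ_right, map_natCast]

theorem descPochhammer_succ_comp_X_add_one (R : Type*) [CommRing R] (n : ℕ) :
    (descPochhammer R (n + 1)).comp (X + 1) = (X + 1) * descPochhammer R n := by
  rw [descPochhammer_succ_left, mul_comp, X_comp, comp_assoc, sub_comp, X_comp, one_comp,
    add_sub_cancel_right, comp_X]

noncomputable def binomialPoly (R : Type*) [CommRing R] [Algebra ℚ R] (n : ℕ) : R[X] :=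
  (n.factorial : ℚ)⁻¹ • ∏ i ∈ range n, (X - C (i : R))

section binomialPoly

variable (R : Type*) [CommRing R] [Algebra ℚ R]

theorem binomialPoly_eq (n : ℕ) :
    binomialPoly R n = (n.factorial : ℚ)⁻¹ • descPochhammer R n := by
  rw [binomialPoly, prod_range_X_sub_C_eq_descPochhammer]

@[simp]
theorem binomialPoly_zero : binomialPoly R 0 = 1 := by
  simp [binomialPoly_eq]

theorem eval_zero_binomialPoly_succ (n : ℕ) : (binomialPoly R (n + 1)).eval 0 = 0 := by
  simp [binomialPoly_eq]

theorem binomialPoly_succ_comp_X_add_one (n : ℕ) :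
    (binomialPoly R (n + 1)).comp (X + 1) = binomialPoly R (n + 1) + binomialPoly R n := by
  have hfac : ((n + 1).factorial : ℚ) ≠ 0 := Nat.cast_ne_zero.2 (Nat.factorial_ne_zero _)
  apply smul_right_injective R[X] hfac
  simp only [binomialPoly_eq, smul_comp, descPochhammer_succ_comp_X_add_one, smul_add, smul_smul,
    mul_inv_cancel₀ hfac, one_smul]
  rw [Nat.factorial_succ, Nat.cast_mul, mul_assoc,
    mul_inv_cancel₀ (Nat.cast_ne_zero.2 (Nat.factorial_ne_zero n)), mul_one,
    Nat.cast_smul_eq_nsmul, nsmul_eq_mul, descPochhammer_succ_right]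
  push_cast
  ring

end binomialPoly

theorem Finset.sum_range_smul_eq_of_pascal {A N : Type*} [Semiring A] [AddCommMonoid N]
    [Module A N] {b b' : ℕ → A} (h0 : b' 0 = b 0) (hs : ∀ n, b' (n + 1) = b (n + 1) + b n)
    {x : ℕ → N} {k : ℕ} (hk : x k = 0) :
    ∑ n ∈ range k, b' n • x n = ∑ n ∈ range k, b n • (x n + x (n + 1)) := by
  cases k with
  | zero => simp
  | succ k =>
    rw [sum_range_succ', h0]
    simp only [hs, add_smul, smul_add, sum_add_distrib]
    rw [sum_range_succ' (fun n => b n • x n), sum_range_succ (fun n => b n • x (n + 1)), hk,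
      smul_zero, add_zero]
    abel

theorem isNilpotent_sub_one_of_mul_eq_one {A : Type*} [Ring A] {a b : A} (hba : b * a = 1)
    (hab : a * b = 1) (ha : IsNilpotent (a - 1)) : IsNilpotent (b - 1) := by
  have hcomm : Commute b (a - 1) := by
    simp only [Commute, SemiconjBy, mul_sub, sub_mul, hba, hab, mul_one, one_mul]
  have hb : b - 1 = -(b * (a - 1)) := by rw [mul_sub, hba, mul_one, neg_sub]
  rw [hb]
  exact (hcomm.isNilpotent_mul_left ha).neg

namespace PolynomialModule

variable {R M : Type*} [CommRing R] [AddCommGroup M] [Module R M]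

theorem eval_eq_sum_fin {f : PolynomialModule R M} {d : ℕ} (hf : ∀ n ∈ f.coeff.support, n < d)
    (r : R) : eval r f = ∑ i : Fin d, r ^ (i : ℕ) • f.coeff i := by
  rw [eval_apply, Finsupp.sum_of_support_subset f.coeff (fun n hn => mem_range.2 (hf n hn))
    (fun i m => r ^ i • m) (fun _ _ => smul_zero _), Finset.sum_range]

theorem eq_zero_of_eval_eq_zero {d : ℕ} (a : Fin d → R) (ha : IsUnit (Matrix.vandermonde a).det)
    {f : PolynomialModule R M} (hf : ∀ n ∈ f.coeff.support, n < d) (h : ∀ j, eval (a j) f = 0) :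
    f = 0 := by
  set V := Matrix.vandermonde a
  have hcoeff : ∀ i : Fin d, f.coeff i = 0 := fun i =>
    calc f.coeff i = ∑ j, (V⁻¹ * V) i j • f.coeff j := by
          simp [Matrix.nonsing_inv_mul V ha, Matrix.one_apply]
      _ = ∑ n, V⁻¹ i n • eval (a n) f := by
          simp only [eval_eq_sum_fin hf, Matrix.mul_apply, Finset.sum_smul, Finset.smul_sum,
            smul_smul, V, Matrix.vandermonde_apply]
          exact Finset.sum_comm
      _ = 0 := by simp [h]
  rw [← coeff_eq_zero]
  ext n
  by_cases hn : n < d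
  · exact hcoeff ⟨n, hn⟩
  · exact Finsupp.notMem_support_iff.1 fun h => hn (hf n h)

theorem eq_zero_of_eval_natCast_eq_zero [Algebra ℚ R] {f : PolynomialModule R M}
    (h : ∀ n : ℕ, eval (n : R) f = 0) : f = 0 := by
  set N := f.coeff.support.sup id
  refine eq_zero_of_eval_eq_zero (fun i : Fin (N + 1) => (i : R)) ?_
    (fun n hn => Nat.lt_succ_of_le (Finset.le_sup (f := id) hn)) (fun j => h j)
  rw [Matrix.det_vandermonde_id_eq_superFactorial, ← map_natCast (algebraMap ℚ R)]
  refine (IsUnit.mk0 _ (Nat.cast_ne_zero.2 ?_)).map _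
  rw [← Nat.prod_range_factorial_succ]
  exact Finset.prod_ne_zero_iff.2 fun _ _ => Nat.factorial_ne_zero _

variable (R) in
noncomputable def twist (f : M →ₗ[R] M) : PolynomialModule R M →ₗ[R] PolynomialModule R M :=
  (comp (X + 1)).comp (map R f)

theorem twist_smul_single (f : M →ₗ[R] M) (p : R[X]) (m : M) :
    twist R f (p • single R 0 m) = p.comp (X + 1) • single R 0 (f m) := by
  rw [twist, LinearMap.comp_apply, map_smul, Algebra.algebraMap_self, Polynomial.map_id,
    map_single, comp_smul, comp_single, pow_zero, one_smul]

theorem eval_twist (f : M →ₗ[R] M) (z : PolynomialModule R M) (r : R) :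
    eval r (twist R f z) = f (eval (r + 1) z) := by
  rw [twist, LinearMap.comp_apply, comp_eval, eval_map']
  simp

theorem eval_natCast_eq_zero_of_twist_eq_self (γ : M ≃ₗ[R] M) {z : PolynomialModule R M}
    (hz : twist R γ z = z) (h0 : eval 0 z = 0) (n : ℕ) : eval (n : R) z = 0 := by
  induction n with
  | zero => simpa using h0
  | succ n ih =>
    rw [← hz, eval_twist] at ih
    exact_mod_cast γ.map_eq_zero_iff.1 ih

variable [Algebra ℚ R]

theorem eq_zero_of_twist_eq_self (γ : M ≃ₗ[R] M) {z : PolynomialModule R M}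
    (hz : twist R γ z = z) (h0 : eval 0 z = 0) : z = 0 :=
  eq_zero_of_eval_natCast_eq_zero (eval_natCast_eq_zero_of_twist_eq_self γ hz h0)

theorem twist_sum_binomialPoly_smul_single (f : M →ₗ[R] M) {u : ℕ → M} {k : ℕ} (hk : u k = 0)
    (hu : ∀ n, f (u n + u (n + 1)) = u n) :
    twist R f (∑ n ∈ range k, binomialPoly R n • single R 0 (u n))
      = ∑ n ∈ range k, binomialPoly R n • single R 0 (u n) := by
  simp only [map_sum, twist_smul_single]
  rw [sum_range_smul_eq_of_pascal (by simp) (binomialPoly_succ_comp_X_add_one R)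
    (x := fun n => single R 0 (f (u n))) (by simp [hk])]
  simp only [← single_add, ← map_add, hu]

theorem eval_zero_sum_binomialPoly_smul_single {u : ℕ → M} {k : ℕ} (hk : u k = 0) :
    eval 0 (∑ n ∈ range k, binomialPoly R n • single R 0 (u n)) = u 0 := by
  cases k with
  | zero => simpa using hk.symm
  | succ k => simp [sum_range_succ', eval_zero_binomialPoly_succ]

end PolynomialModule

open PolynomialModule

/-- Let `R` be a commutative `ℚ`-algebra, `M` an `R`-module, and `γ` an `R`-linear
automorphism of `M` with `γ − id` nilpotent. Extend `γ` to the semilinear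
automorphism `γ̃` of `M[W]` (the polynomial module) with `γ̃(m·Wⁿ) = γ(m)·(W+1)ⁿ`.
Then evaluation at `W = 0` restricts to an `R`-module isomorphism from the fixed
points `{x ∈ M[W] : γ̃ x = x}` onto `M`, whose inverse sends `v` to the (finite, by
nilpotence) sum `Σ_{n≥0} binom(W,n) • (γ⁻¹ − 1)ⁿ(v)` where
`binom(W,n) = W(W−1)⋯(W−n+1)/n! ∈ ℚ[W] ⊆ R[W]`. -/
theorem unipotent_decompletion {R : Type*} [CommRing R] [Algebra ℚ R]
    {M : Type*} [AddCommGroup M] [Module R M]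
    (γ : M ≃ₗ[R] M)
    (hnil : IsNilpotent ((γ : M →ₗ[R] M) - LinearMap.id)) :
    -- the twisted extension `γ̃` of `γ` to `M[W]`, acting by `W ↦ W + 1` on `W`
    let γt : PolynomialModule R M →ₗ[R] PolynomialModule R M :=
      (PolynomialModule.comp (Polynomial.X + 1)).comp
        (PolynomialModule.map R (γ : M →ₗ[R] M))
    -- the binomial polynomial `binom(W, n) = W(W−1)⋯(W−n+1)/n!`
    let binomW : ℕ → Polynomial R := fun n =>
      (n.factorial : ℚ)⁻¹ • ∏ i ∈ Finset.range n, (Polynomial.X - Polynomial.C (i : R))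
    -- the candidate inverse `v ↦ Σ_{n < k} binom(W,n) • (γ⁻¹ − 1)ⁿ(v)`
    let s : ℕ → M → PolynomialModule R M := fun k v =>
      ∑ n ∈ Finset.range k,
        binomW n • PolynomialModule.single R 0
          ((((γ.symm : M →ₗ[R] M) - LinearMap.id : M →ₗ[R] M) ^ n) v)
    -- evaluation at `W = 0` is a bijection from the fixed points of `γ̃` onto `M` …
    Function.Bijective
      (fun x : LinearMap.ker (γt - LinearMap.id) => PolynomialModule.eval (0 : R) x.1) ∧
    -- … whose inverse is given by the finite sum `s k v` (for any `k` past the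
    -- nilpotence degree of `γ⁻¹ − 1`): `s k v` is a fixed point evaluating to `v`
    ∀ (v : M) (k : ℕ), ((γ.symm : M →ₗ[R] M) - LinearMap.id) ^ k = 0 →
      γt (s k v) = s k v ∧ PolynomialModule.eval (0 : R) (s k v) = v := by
  intro γt binomW s
  set δ : M →ₗ[R] M := (γ.symm : M →ₗ[R] M) - LinearMap.id
  have hsol : ∀ (v : M) (k : ℕ), δ ^ k = 0 → γt (s k v) = s k v ∧ eval 0 (s k v) = v := by
    intro v k hk
    have hvk : (δ ^ k) v = 0 := by rw [hk]; rfl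
    have hu : ∀ n, γ ((δ ^ n) v + (δ ^ (n + 1)) v) = (δ ^ n) v := fun n => by
      rw [pow_succ', Module.End.mul_apply]
      simp [δ]
    exact ⟨twist_sum_binomialPoly_smul_single (γ : M →ₗ[R] M) hvk hu,
      eval_zero_sum_binomialPoly_smul_single hvk⟩
  refine ⟨⟨fun x y hxy => ?_, fun v => ?_⟩, hsol⟩
  · have hfix : ∀ z : LinearMap.ker (γt - LinearMap.id), γt z = z := fun z => sub_eq_zero.1 z.2
    refine Subtype.ext (sub_eq_zero.1 (eq_zero_of_twist_eq_self γ ?_ ?_))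
    · rw [map_sub]
      exact congr_arg₂ _ (hfix x) (hfix y)
    · rw [map_sub, sub_eq_zero]
      exact hxy
  · obtain ⟨k, hk⟩ := isNilpotent_sub_one_of_mul_eq_one (b := (γ.symm : Module.End R M))
      (by ext; simp) (by ext; simp) hnil
    exact ⟨⟨s k v, sub_eq_zero.2 (hsol v k hk).1⟩, (hsol v k hk).2⟩
end
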